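/- arXiv:1206.5959 — 3 statements merged into one kernel-verified Lean document; each statement's English description precedes it below -/
import Mathlib

section
/- Monotonicity of robust length: if P is a u-t path and P' is a v-t path that is a subpath of P (i.e., P' = P[v,t] for some vertex v on P), then Val(P) ≥ Val(P'), assuming all edge weights are nonnegative. -/
open scoped ENNReal

noncomputable section

/-- The length of a walk w.r.t. edge weights `ℓ`. -/
def wlen {V : Type*} {G : SimpleGraph V} (ℓ : Sym2 V → ℝ≥0∞) {u v : V} (p : G.Walk u v) : ℝ≥0∞ :=
  (p.edges.map ℓ).sum

/-- Weighted shortest-path distance in `G`. -/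
def wdist {V : Type*} (G : SimpleGraph V) (ℓ : Sym2 V → ℝ≥0∞) (u v : V) : ℝ≥0∞ :=
  ⨅ p : G.Walk u v, wlen ℓ p

/-- `s_u^{-e}`: the shortest `u`-`t` distance in `G` with edge `e` removed. -/
def sval {V : Type*} (G : SimpleGraph V) (ℓ : Sym2 V → ℝ≥0∞) (t : V) (e : Sym2 V) (u : V) :
    ℝ≥0∞ :=
  wdist (G.deleteEdges {e}) ℓ u t

/-- The supremum, over edges `uu'` of the walk (u nearer the start), of
`ℓ(P[v,u]) + s_u^{-uu'}`. -/
def detourSup {V : Type*} (G : SimpleGraph V) (ℓ : Sym2 V → ℝ≥0∞) (t : V) :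
    ∀ {v : V}, G.Walk v t → ℝ≥0∞
  | _, SimpleGraph.Walk.nil => 0
  | v, @SimpleGraph.Walk.cons _ _ _ w _ _h p =>
      max (sval G ℓ t s(v, w) v) (ℓ s(v, w) + detourSup G ℓ t p)

/-- The robust length `Val(P)` of a `v`-`t` walk `P`. -/
def rVal {V : Type*} (G : SimpleGraph V) (ℓ : Sym2 V → ℝ≥0∞) (t : V) {v : V}
    (p : G.Walk v t) : ℝ≥0∞ :=
  max (wlen ℓ p) (detourSup G ℓ t p)

/-- The potential `y(v)`: minimum robust length over all simple `v`-`t` paths. -/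
def pot {V : Type*} (G : SimpleGraph V) (ℓ : Sym2 V → ℝ≥0∞) (t v : V) : ℝ≥0∞ :=
  ⨅ p : {p : G.Walk v t // p.IsPath}, rVal G ℓ t p.1

/-! Prepending an edge to a walk adds a nonnegative weight to its length and to every detour term
and contributes one more detour term, so it cannot decrease the robust length; the suffix
`P[v,t]` becomes `P` after prepending the edges of `P[u,v]` one at a time. -/

namespace SimpleGraph.Walk

variable {V : Type*} {G : SimpleGraph V} (ℓ : Sym2 V → ℝ≥0∞)

theorem wlen_cons {a b c : V} (h : G.Adj a b) (p : G.Walk b c) :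
    wlen ℓ (cons h p) = ℓ s(a, b) + wlen ℓ p := by
  simp [wlen]

theorem rVal_le_rVal_cons {t a b : V} (h : G.Adj a b) (p : G.Walk b t) :
    rVal G ℓ t p ≤ rVal G ℓ t (cons h p) := by
  simp only [rVal, wlen_cons, detourSup]
  exact max_le_max le_add_self (le_max_of_le_right le_add_self)

theorem rVal_le_rVal_append {t a b : V} (p : G.Walk a b) (q : G.Walk b t) :
    rVal G ℓ t q ≤ rVal G ℓ t (p.append q) := by
  induction p with
  | nil => exact le_rfl
  | cons h p ih => exact (ih q).trans (rVal_le_rVal_cons ℓ h _)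

end SimpleGraph.Walk

theorem robust_length_monotone_general {V : Type*} [DecidableEq V]
    (G : SimpleGraph V) (ℓ : Sym2 V → ℝ≥0∞) (t u v : V)
    (P : G.Walk u t) (hv : v ∈ P.support) :
    rVal G ℓ t (P.dropUntil v hv) ≤ rVal G ℓ t P := by
  simpa only [P.take_spec hv] using
    (P.takeUntil v hv).rVal_le_rVal_append ℓ (P.dropUntil v hv)

/-- Monotonicity of robust length: if `P` is a `u`-`t` path and
`P' = P[v,t]` is a subpath of `P` (from a vertex `v` on `P` to `t`), then
`Val(P) ≥ Val(P')`. -/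
theorem robust_length_monotone {V : Type*} [Fintype V] [DecidableEq V]
    (G : SimpleGraph V) (ℓ : Sym2 V → ℝ≥0∞) (t u v : V)
    (P : G.Walk u t) (hP : P.IsPath) (hv : v ∈ P.support) :
    rVal G ℓ t (P.dropUntil v hv) ≤ rVal G ℓ t P :=
  robust_length_monotone_general G ℓ t u v P hv
end
end

section
/- Let P_u be a u-t path and let v be a neighbor of u not incident to P_u. Then the path P_v = P_u ∪ {vu} satisfies Val(P_v) = max{ℓ(vu) + Val(P_u), s_v^{-vu}}. -/
open scoped ENNReal

noncomputable section

section

variable {V : Type*} {G : SimpleGraph V} (ℓ : Sym2 V → ℝ≥0∞) {t u v : V}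

theorem wlen_cons (h : G.Adj v u) (p : G.Walk u t) :
    wlen ℓ (.cons h p) = ℓ s(v, u) + wlen ℓ p := by
  simp only [wlen, SimpleGraph.Walk.edges_cons, List.map_cons, List.sum_cons]

theorem detourSup_cons (h : G.Adj v u) (p : G.Walk u t) :
    detourSup G ℓ t (.cons h p) = max (sval G ℓ t s(v, u) v) (ℓ s(v, u) + detourSup G ℓ t p) :=
  rfl

end

theorem robust_length_cons_general {V : Type*}
    (G : SimpleGraph V) (ℓ : Sym2 V → ℝ≥0∞) (t u v : V)
    (Pu : G.Walk u t) (h : G.Adj v u) :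
    rVal G ℓ t (SimpleGraph.Walk.cons h Pu) =
      max (ℓ s(v, u) + rVal G ℓ t Pu) (sval G ℓ t s(v, u) v) := by
  rw [rVal, rVal, wlen_cons, detourSup_cons, add_max]
  ac_rfl

/-- Let `P_u` be a `u`-`t` path and `v` a neighbor of `u` not incident
to `P_u`. Then `P_v = P_u ∪ {vu}` satisfies
`Val(P_v) = max{ℓ(vu) + Val(P_u), s_v^{-vu}}`. -/
theorem robust_length_cons {V : Type*} [Fintype V] [DecidableEq V]
    (G : SimpleGraph V) (ℓ : Sym2 V → ℝ≥0∞) (t u v : V)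
    (Pu : G.Walk u t) (hPu : Pu.IsPath) (h : G.Adj v u) (hv : v ∉ Pu.support) :
    rVal G ℓ t (SimpleGraph.Walk.cons h Pu) =
      max (ℓ s(v, u) + rVal G ℓ t Pu) (sval G ℓ t s(v, u) v) :=
  robust_length_cons_general G ℓ t u v Pu h
end
end

section
/- For any bound B ≥ y(s), there exists an s-t path P* with Val(P*) ≤ B minimizing ℓ(P) among all s-t paths P with Val(P) ≤ B; moreover, the modified Dijkstra relaxation—relaxing edge uv from u only if d(u) + ℓ(uv) ≤ d(v) and d(u) + s_u^{-uv} ≤ B—computes d(t) = min{ℓ(P) : P ∈ P_{s,t}, Val(P) ≤ B}. -/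
open scoped ENNReal

noncomputable section

/-!
On a path every vertex occurs once, so the prefix `P[s,u]` in front of an edge `uu'` is
`P.takeUntil u`, and unfolding the recursion of `detourSup` shows that `Val(P)` is the maximum of
`ℓ(P)` and the costs `ℓ(P[s,u]) + s_u^{-uu'}` over the edges of `P`. Hence `Val(P) ≤ B` exactly when
`ℓ(P) ≤ B` and `P` passes every check of the relaxation. As there are finitely many paths,
`y(s) ≤ B` yields a path of robust length at most `B`, hence a shortest such path; its length is
at most `B`, so feasible paths longer than `B` do not change the minimum.
-/

namespace SimpleGraph

variable {V : Type*} {G : SimpleGraph V} {ℓ : Sym2 V → ℝ≥0∞}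

@[simp]
lemma wlen_nil {u : V} : wlen ℓ (Walk.nil : G.Walk u u) = 0 := rfl

@[simp]
lemma wlen_cons {u v w : V} (h : G.Adj u v) (p : G.Walk v w) :
    wlen ℓ (Walk.cons h p) = ℓ s(u, v) + wlen ℓ p := by
  simp [wlen]

lemma finite_setOf_isPath [Finite V] (G : SimpleGraph V) (u v : V) :
    {p : G.Walk u v | p.IsPath}.Finite := by
  classical
  have := Fintype.ofFinite V
  exact Set.finite_coe_iff.mp (inferInstanceAs (Finite (G.Path u v)))

variable [DecidableEq V] {t : V}

/-- `ℓ(p[v,u]) + s_u^{-uu'}` for the dart `d = (u, u')` of `p`. -/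
def detourCost (ℓ : Sym2 V → ℝ≥0∞) {v : V} (p : G.Walk v t) (d : G.Dart) (hd : d ∈ p.darts) :
    ℝ≥0∞ :=
  wlen ℓ (p.takeUntil d.fst (p.dart_fst_mem_support_of_mem_darts hd)) +
    sval G ℓ t s(d.fst, d.snd) d.fst

/-- The constraint checked by the modified Dijkstra relaxation along every edge of `p`. -/
def DetourFeasible (ℓ : Sym2 V → ℝ≥0∞) (B : ℝ≥0∞) {v : V} (p : G.Walk v t) : Prop :=
  ∀ (d : G.Dart) (hd : d ∈ p.darts), detourCost ℓ p d hd ≤ B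

lemma detourCost_cons_head {v w : V} (h : G.Adj v w) (p : G.Walk w t) :
    detourCost ℓ (Walk.cons h p) ⟨(v, w), h⟩ (by simp) = sval G ℓ t s(v, w) v := by
  simp [detourCost]

lemma detourCost_cons_of_mem {v w : V} (h : G.Adj v w) (p : G.Walk w t) (hv : v ∉ p.support)
    {d : G.Dart} (hd : d ∈ p.darts) :
    detourCost ℓ (Walk.cons h p) d (by simp [hd]) = ℓ s(v, w) + detourCost ℓ p d hd := by
  have hne : v ≠ d.fst := fun h => hv (h ▸ p.dart_fst_mem_support_of_mem_darts hd)
  simp only [detourCost, Walk.takeUntil_cons (p.dart_fst_mem_support_of_mem_darts hd) hne,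
    wlen_cons, add_assoc]

lemma add_detourSup_le_iff : ∀ {v : V} {p : G.Walk v t}, p.IsPath → ∀ (a B : ℝ≥0∞),
    a + detourSup G ℓ t p ≤ B ↔
      a + wlen ℓ p ≤ B ∧ ∀ (d : G.Dart) (hd : d ∈ p.darts), a + detourCost ℓ p d hd ≤ B
  | _, .nil, _, a, B => by simp [detourSup]
  | v, .cons (v := w) h p, hp, a, B => by
    obtain ⟨hp, hv⟩ := Walk.cons_isPath_iff h p |>.mp hp
    have ih := add_detourSup_le_iff hp (a + ℓ s(v, w)) B
    simp only [detourSup, wlen_cons, ← max_add_add_left, max_le_iff, ← add_assoc, ih]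
    refine ⟨fun ⟨hhead, hlen, htail⟩ => ⟨hlen, fun d hd => ?_⟩,
      fun ⟨hlen, hcost⟩ => ⟨?_, hlen, fun d hd => ?_⟩⟩
    · rcases List.mem_cons.mp hd with rfl | hd
      · rwa [detourCost_cons_head]
      · rw [detourCost_cons_of_mem h p hv hd, ← add_assoc]
        exact htail d hd
    · simpa only [detourCost_cons_head] using hcost ⟨(v, w), h⟩ (by simp)
    · simpa only [detourCost_cons_of_mem h p hv hd, ← add_assoc] using hcost d (by simp [hd])

lemma rVal_le_iff {v : V} {p : G.Walk v t} (hp : p.IsPath) (B : ℝ≥0∞) :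
    rVal G ℓ t p ≤ B ↔ wlen ℓ p ≤ B ∧ DetourFeasible ℓ B p := by
  have h := add_detourSup_le_iff (ℓ := ℓ) hp 0 B
  simp only [zero_add] at h
  rw [rVal, max_le_iff, h, ← and_assoc, and_self]
  rfl

lemma exists_isPath_rVal_le [Finite V] {s : V} (hr : G.Reachable s t) {B : ℝ≥0∞}
    (hB : pot G ℓ t s ≤ B) : ∃ p : G.Walk s t, p.IsPath ∧ rVal G ℓ t p ≤ B := by
  obtain ⟨p, hp, hmin⟩ := Set.exists_min_image _ (rVal G ℓ t) (finite_setOf_isPath G s t)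
    ⟨_, hr.some.bypass_isPath⟩
  have hpot : rVal G ℓ t p ≤ pot G ℓ t s := le_iInf fun q => hmin q.1 q.2
  exact ⟨p, hp, hpot.trans hB⟩

lemma iInf_detourFeasible_eq_iInf_rVal_le {s : V} {B : ℝ≥0∞}
    (h : ∃ p : G.Walk s t, p.IsPath ∧ rVal G ℓ t p ≤ B) :
    ⨅ p : {p : G.Walk s t // p.IsPath ∧ DetourFeasible ℓ B p}, wlen ℓ p.1 =
      ⨅ p : {p : G.Walk s t // p.IsPath ∧ rVal G ℓ t p ≤ B}, wlen ℓ p.1 := by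
  obtain ⟨p₀, hp₀, hp₀B⟩ := h
  refine le_antisymm (le_iInf fun p => ?_) (le_iInf fun p => ?_)
  · exact iInf_le_of_le ⟨p.1, p.2.1, ((rVal_le_iff p.2.1 B).1 p.2.2).2⟩ le_rfl
  · by_cases hlen : wlen ℓ p.1 ≤ B
    · exact iInf_le_of_le ⟨p.1, p.2.1, (rVal_le_iff p.2.1 B).2 ⟨hlen, p.2.2⟩⟩ le_rfl
    · calc ⨅ q : {q : G.Walk s t // q.IsPath ∧ rVal G ℓ t q ≤ B}, wlen ℓ q.1
          ≤ wlen ℓ p₀ := iInf_le_of_le ⟨p₀, hp₀, hp₀B⟩ le_rfl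
        _ ≤ B := ((rVal_le_iff hp₀ B).1 hp₀B).1
        _ ≤ wlen ℓ p.1 := (not_le.1 hlen).le

end SimpleGraph

open SimpleGraph

/-- For any bound `B ≥ y(s)` (with `t` reachable from `s`), there is
an `s`-`t` path `P*` with `Val(P*) ≤ B` minimizing `ℓ` among all `s`-`t` paths `P`
with `Val(P) ≤ B`; moreover the modified Dijkstra relaxation — which relaxes an
edge out of `u` only if the prefix length plus the detour value `s_u^{-uu'}` stays
at most `B` — computes `d(t) = min{ℓ(P) : P ∈ P_{s,t}, Val(P) ≤ B}`: the infimum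
of `ℓ` over relaxation-feasible paths (those whose every dart satisfies the
per-edge detour constraint) equals the infimum of `ℓ` over paths of robust length
at most `B`. -/
theorem pareto_optimal_orp {V : Type*} [Fintype V] [DecidableEq V]
    (G : SimpleGraph V) (ℓ : Sym2 V → ℝ≥0∞) (s t : V) (B : ℝ≥0∞)
    (hr : G.Reachable s t) (hB : pot G ℓ t s ≤ B) :
    (∃ P : G.Walk s t, P.IsPath ∧ rVal G ℓ t P ≤ B ∧
      ∀ Q : G.Walk s t, Q.IsPath → rVal G ℓ t Q ≤ B → wlen ℓ P ≤ wlen ℓ Q) ∧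
    (⨅ P : {P : G.Walk s t // P.IsPath ∧
        ∀ (d : G.Dart) (hd : d ∈ P.darts),
          wlen ℓ (P.takeUntil d.fst (P.dart_fst_mem_support_of_mem_darts hd)) +
            sval G ℓ t s(d.fst, d.snd) d.fst ≤ B}, wlen ℓ P.1) =
      ⨅ P : {P : G.Walk s t // P.IsPath ∧ rVal G ℓ t P ≤ B}, wlen ℓ P.1 := by
  have hrobust := exists_isPath_rVal_le hr hB
  obtain ⟨P, ⟨hP, hPB⟩, hmin⟩ :=
    Set.exists_min_image {P : G.Walk s t | P.IsPath ∧ rVal G ℓ t P ≤ B} (wlen ℓ)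
      ((finite_setOf_isPath G s t).subset fun _ => And.left) hrobust
  exact ⟨⟨P, hP, hPB, fun Q hQ hQB => hmin Q ⟨hQ, hQB⟩⟩,
    iInf_detourFeasible_eq_iInf_rVal_le hrobust⟩
end
end
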